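/- Let q > 2 be a prime power and r ≥ 2 an integer. If (q,r) ≠ (3,2), then the weight set of the q-ary Hamming code H_r(q) equals {0} ∪ {3, 4, …, θ_q(r−1)}, where θ_q(r−1) = (q^r − 1)/(q − 1); in the exceptional case q = 3, r = 2, the weight set of H_2(3) equals {0, 3}. -/

import Mathlib

/-- Hamming weight: the number of nonzero coordinates. -/
noncomputable def hwt {ι F : Type*} [Zero F] (c : ι → F) : ℕ := Set.ncard {i | c i ≠ 0}

/-- `P_r(q)`: the set of nonzero vectors of `F^r` whose first nonzero entry equals `1`,
a set of representatives of the projective space `PG(r-1, q)`. -/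
def ProjReps (F : Type*) [Zero F] [One F] (r : ℕ) : Set (Fin r → F) :=
  {u | ∃ i : Fin r, u i = 1 ∧ ∀ j : Fin r, j < i → u j = 0}

/-- The `q`-ary Hamming code `H_r(q)`: all vectors `c`, with coordinates indexed by
`P_r(q)`, such that `Σ_{u ∈ P_r(q)} c_u • u = 0` in `F^r`. -/
def HammingCode (F : Type*) [Field F] (r : ℕ) : Set (ProjReps F r → F) :=
  {c | ∑ᶠ u : ProjReps F r, c u • (u : Fin r → F) = 0}

/-!
Split the points of `P_{r+1}` other than the apex `e = (0, …, 0, 1)` into the `|P_r|` affine lines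
`{(m, t) | t ∈ F}`, `m ∈ P_r`. A word `c` lies in `H_{r+1}` iff the first moments `∑_t c(m,t)` of
its line patterns form a word of `H_r` and `c(e) = -∑_m ∑_t c(m,t) t`. Choosing on each line a
pattern with vanishing first moment therefore yields codewords whose weight is the sum of the
pattern sizes, plus one unless the second moments cancel. For `q ≥ 4`, adding a multiple of a
three-point pattern with vanishing moments enlarges a pattern by one point, which gives patterns of
every size in `[3, q]` with moments `(0, 0)` and in `[2, q]` with moments `(0, 1)`; this reaches
every weight in `[3, q |P_r| + 1]`. For `q = 3` the same works below full weight, and full weight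
comes from placing full-support patterns over a nonzero word of `H_r`, available when `r ≥ 2`.
Conversely two distinct points are independent, so the minimum weight is `3`; and in `H_2(3)` full
weight is impossible, since over `𝔽₃` a nowhere-zero pattern with zero sum is constant.
-/

open Finset

section Weight

variable {ι F : Type*} [Zero F]

theorem hwt_zero : hwt (0 : ι → F) = 0 := by
  simp [hwt]

variable [Fintype ι]

theorem hwt_le_card (c : ι → F) : hwt c ≤ Fintype.card ι :=
  (Set.ncard_le_card _).trans_eq Nat.card_eq_fintype_card

theorem hwt_eq_card [DecidableEq F] (c : ι → F) : hwt c = #{i | c i ≠ 0} := by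
  rw [hwt, ← Set.ncard_coe_finset]
  simp

theorem hwt_eq_card_of_forall_ne_zero {c : ι → F} (hc : ∀ i, c i ≠ 0) :
    hwt c = Fintype.card ι := by
  have hsupp : {i | c i ≠ 0} = Set.univ := Set.eq_univ_of_forall hc
  rw [hwt, hsupp, Set.ncard_univ, Nat.card_eq_fintype_card]

theorem forall_ne_zero_of_hwt_eq_card {c : ι → F} (hc : hwt c = Fintype.card ι) (i : ι) :
    c i ≠ 0 := by
  have hsupp : {i | c i ≠ 0} = Set.univ := Set.eq_of_subset_of_ncard_le (Set.subset_univ _)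
    (by rw [Set.ncard_univ, Nat.card_eq_fintype_card]; exact hc.ge)
  simpa using hsupp.ge (Set.mem_univ i)

end Weight

theorem hwt_smul {ι F : Type*} [Field F] {a : F} (ha : a ≠ 0) (c : ι → F) : hwt (a • c) = hwt c :=
  congrArg Set.ncard (Function.support_const_smul_of_ne_zero a c ha)

theorem Fintype.sum_comp_extend_zero {ι κ M N : Type*} [Fintype ι] [Fintype κ] [AddCommMonoid M]
    [Zero N] (e : ι ↪ κ) (p : ι → N) {φ : N → M} (hφ : φ 0 = 0) :
    ∑ k, φ (Function.extend e p 0 k) = ∑ i, φ (p i) := by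
  classical
  rw [← Finset.sum_subset (subset_univ (univ.map e)), sum_map]
  · simp [e.injective.extend_apply]
  · intro k _ hk
    rw [Function.extend_apply' _ _ _ (by simpa using hk), Pi.zero_apply, hφ]

namespace ProjReps

variable {F : Type*} [Field F] {r : ℕ}

theorem ne_zero {u : Fin r → F} (hu : u ∈ ProjReps F r) : u ≠ 0 := by
  obtain ⟨i, hi, -⟩ := hu
  rintro rfl
  exact zero_ne_one hi

theorem eq_of_eq_smul {u v : Fin r → F} (hu : u ∈ ProjReps F r)
    (hv : v ∈ ProjReps F r) {a : F} (h : u = a • v) : u = v := by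
  obtain ⟨i, hui, hu0⟩ := hu
  obtain ⟨j, hvj, hv0⟩ := hv
  have hij := congrFun h i
  have hji := congrFun h j
  simp only [Pi.smul_apply, smul_eq_mul] at hij hji
  rcases lt_trichotomy i j with hlt | rfl | hlt
  · simp [hui, hv0 i hlt] at hij
  · rw [h, show a = 1 by simpa [hui, hvj] using hij.symm, one_smul]
  · simp [hu0 j hlt, hvj] at hji
    simp [← hji, hui] at hij

theorem smul_add_smul_eq_zero {u v : Fin r → F} (hu : u ∈ ProjReps F r)
    (hv : v ∈ ProjReps F r) (huv : u ≠ v) {a b : F} (h : a • u + b • v = 0) : a = 0 := by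
  by_contra ha
  refine huv (eq_of_eq_smul hu hv (a := -(a⁻¹ * b)) ?_)
  rw [neg_smul, mul_smul, ← smul_neg, ← eq_neg_of_add_eq_zero_left h, inv_smul_smul₀ ha]

theorem snoc_mem {m : Fin r → F} (hm : m ∈ ProjReps F r) (t : F) :
    (Fin.snoc m t : Fin (r + 1) → F) ∈ ProjReps F (r + 1) := by
  obtain ⟨i, hi, h0⟩ := hm
  refine ⟨i.castSucc, by simpa using hi, fun j hj => ?_⟩
  obtain ⟨j, rfl⟩ := Fin.exists_castSucc_eq.mpr (hj.trans (Fin.castSucc_lt_last i)).ne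
  simpa using h0 j (Fin.castSucc_lt_castSucc_iff.mp hj)

theorem snoc_zero_one_mem (r : ℕ) : (Fin.snoc 0 1 : Fin (r + 1) → F) ∈ ProjReps F (r + 1) := by
  refine ⟨Fin.last r, by simp, fun j hj => ?_⟩
  obtain ⟨j, rfl⟩ := Fin.exists_castSucc_eq.mpr hj.ne
  simp

theorem init_mem {u : Fin (r + 1) → F} (hu : u ∈ ProjReps F (r + 1))
    (h : Fin.init u ≠ 0) : Fin.init u ∈ ProjReps F r := by
  obtain ⟨i, hi, h0⟩ := hu
  obtain ⟨i, rfl⟩ : ∃ i' : Fin r, i'.castSucc = i := by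
    refine Fin.exists_castSucc_eq.mpr fun hl => h (funext fun j => ?_)
    exact h0 _ (hl ▸ Fin.castSucc_lt_last j)
  exact ⟨i, hi, fun j hj => h0 _ (Fin.castSucc_lt_castSucc_iff.mpr hj)⟩

theorem eq_snoc_zero_one {u : Fin (r + 1) → F} (hu : u ∈ ProjReps F (r + 1))
    (h : Fin.init u = 0) : u = Fin.snoc 0 1 := by
  obtain ⟨i, hi, -⟩ := hu
  obtain rfl : i = Fin.last r := by
    by_contra hne
    obtain ⟨i, rfl⟩ := Fin.exists_castSucc_eq.mpr hne
    exact zero_ne_one ((congrFun h i).symm.trans hi)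
  rw [← Fin.snoc_init_self u, h, hi]

def lift (m : ProjReps F r) (t : F) : ProjReps F (r + 1) := ⟨Fin.snoc m.1 t, snoc_mem m.2 t⟩

/-- The point `(0, …, 0, 1)`, common to the lines `{lift m t | t : F}` of `P_{r+1}`. -/
def apex (r : ℕ) : ProjReps F (r + 1) := ⟨Fin.snoc 0 1, snoc_zero_one_mem r⟩

variable [DecidableEq F]

instance (r : ℕ) : DecidablePred (· ∈ ProjReps F r) := fun u =>
  inferInstanceAs (Decidable (∃ i : Fin r, u i = 1 ∧ ∀ j : Fin r, j < i → u j = 0))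

def succEquiv (r : ℕ) : ProjReps F r × F ⊕ Unit ≃ ProjReps F (r + 1) where
  toFun := Sum.elim (fun p => lift p.1 p.2) fun _ => apex r
  invFun u :=
    if h : Fin.init u.1 = 0 then Sum.inr () else Sum.inl (⟨_, init_mem u.2 h⟩, u.1 (Fin.last r))
  left_inv x := by
    rcases x with ⟨m, t⟩ | ⟨⟩
    · simp [lift, ne_zero m.2]
    · simp [apex]
  right_inv u := by
    by_cases h : Fin.init u.1 = 0
    · simp [h, apex, ← eq_snoc_zero_one u.2 h]
    · simp [h, lift]

variable [Fintype F]

theorem sum_succ {M : Type*} [AddCommMonoid M] (f : ProjReps F (r + 1) → M) :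
    ∑ u, f u = ∑ m, ∑ t, f (lift m t) + f (apex r) := by
  rw [← (succEquiv r).sum_comp, Fintype.sum_sum_type, Fintype.sum_prod_type]
  simp [succEquiv]

theorem card_succ :
    Fintype.card (ProjReps F (r + 1)) = Fintype.card F * Fintype.card (ProjReps F r) + 1 := by
  rw [← Fintype.card_congr (succEquiv r)]
  simp [mul_comm]

theorem card_zero : Fintype.card (ProjReps F 0) = 0 :=
  Fintype.card_eq_zero_iff.mpr ⟨fun u => u.2.choose.elim0⟩

theorem card_mul_add_one (r : ℕ) :
    Fintype.card (ProjReps F r) * (Fintype.card F - 1) + 1 = Fintype.card F ^ r := by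
  obtain ⟨d, hd⟩ : ∃ d, Fintype.card F = d + 1 :=
    ⟨_, (Nat.succ_pred_eq_of_pos Fintype.card_pos).symm⟩
  induction r with
  | zero => rw [card_zero, zero_mul, zero_add, pow_zero]
  | succ r ih => rw [card_succ, pow_succ, ← ih, hd]; simp; ring

theorem card_eq_div (r : ℕ) :
    Fintype.card (ProjReps F r) = (Fintype.card F ^ r - 1) / (Fintype.card F - 1) := by
  have hq : 0 < Fintype.card F - 1 := Nat.sub_pos_of_lt Fintype.one_lt_card
  rw [← card_mul_add_one r, Nat.add_sub_cancel, Nat.mul_div_cancel _ hq]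

theorem one_le_card (hr : 1 ≤ r) : 1 ≤ Fintype.card (ProjReps F r) := by
  obtain ⟨r, rfl⟩ := Nat.exists_eq_add_of_le' hr
  rw [card_succ]
  exact Nat.le_add_left _ _

end ProjReps

section LineMoments

variable {F : Type*} [Field F] [Fintype F]

/-- The moments of a pattern `g` on the line `{lift m t | t : F}`: the word `g` on that line
contributes `(lineMoments g).1 • m` to the first `r` coordinates of the syndrome and
`(lineMoments g).2` to the last one. -/
def lineMoments : (F → F) →ₗ[F] F × F where
  toFun g := (∑ t, g t, ∑ t, g t * t)
  map_add' g h := by simp [sum_add_distrib, add_mul]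
  map_smul' a g := by simp [mul_sum, mul_assoc]

theorem lineMoments_apply (g : F → F) : lineMoments g = (∑ t, g t, ∑ t, g t * t) := rfl

theorem lineMoments_one (hq : 2 < Fintype.card F) : lineMoments (1 : F → F) = 0 := by
  have hsum : ∑ t : F, t = 0 := by
    simpa using FiniteField.sum_pow_lt_card_sub_one (K := F) 1 (by omega)
  simp [lineMoments_apply, hsum]

end LineMoments

section Code

variable {F : Type*} [Field F] [Fintype F] [DecidableEq F] {r : ℕ}

theorem mem_hammingCode_iff {c : ProjReps F r → F} :
    c ∈ HammingCode F r ↔ ∑ u, c u • (u : Fin r → F) = 0 := by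
  rw [HammingCode, Set.mem_ofPred_eq, finsum_eq_sum_of_fintype]

theorem zero_mem_hammingCode (r : ℕ) : (0 : ProjReps F r → F) ∈ HammingCode F r := by
  simp [mem_hammingCode_iff]

open ProjReps

theorem mem_hammingCode_succ_iff (c : ProjReps F (r + 1) → F) :
    c ∈ HammingCode F (r + 1) ↔
      (fun m => (lineMoments fun t => c (lift m t)).1) ∈ HammingCode F r ∧
        ∑ m, (lineMoments fun t => c (lift m t)).2 + c (apex r) = 0 := by
  have hsum : ∑ u, c u • (u : Fin (r + 1) → F) =
      Fin.snoc (∑ m, (∑ t, c (lift m t)) • (m : Fin r → F))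
        (∑ m, ∑ t, c (lift m t) * t + c (apex r)) := by
    rw [sum_succ]
    ext j
    refine Fin.lastCases ?_ (fun j => ?_) j
    · simp [lift, apex]
    · simp [lift, apex, sum_mul]
  rw [mem_hammingCode_iff, mem_hammingCode_iff, hsum,
    ← Fin.snoc_init_self (0 : Fin (r + 1) → F), Fin.snoc_inj]
  exact Iff.rfl

theorem hwt_succ (c : ProjReps F (r + 1) → F) :
    hwt c = ∑ m, hwt (fun t => c (lift m t)) + if c (apex r) = 0 then 0 else 1 := by
  simp only [hwt_eq_card, card_filter, sum_succ (fun u => if c u ≠ 0 then 1 else 0)]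
  simp [ite_not]

/-- The apex coordinate absorbs the second moments. -/
theorem exists_mem_hammingCode_succ (G : ProjReps F r → F → F)
    (hG : (fun m => (lineMoments (G m)).1) ∈ HammingCode F r) :
    ∃ c ∈ HammingCode F (r + 1),
      hwt c = ∑ m, hwt (G m) + if ∑ m, (lineMoments (G m)).2 = 0 then 0 else 1 := by
  let c : ProjReps F (r + 1) → F := fun u =>
    Sum.elim (fun p => G p.1 p.2) (fun _ => -∑ m, (lineMoments (G m)).2) ((succEquiv r).symm u)
  have hlift : ∀ m t, c (lift m t) = G m t := fun m t => by
    simp [c, ← show succEquiv r (.inl (m, t)) = lift m t from rfl]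
  have hapex : c (apex r) = -∑ m, (lineMoments (G m)).2 := by
    simp [c, ← show succEquiv r (.inr ()) = apex r from rfl]
  refine ⟨c, (mem_hammingCode_succ_iff c).mpr ?_, ?_⟩
  · simp only [hlift, hapex]
    exact ⟨hG, add_neg_cancel _⟩
  · simp only [hwt_succ, hlift, hapex, neg_eq_zero]

theorem exists_mem_hammingCode_succ_of_family {ι : Type*} [Fintype ι]
    (hι : Fintype.card ι ≤ Fintype.card (ProjReps F r)) (p : ι → F → F)
    (hp : ∀ i, (lineMoments (p i)).1 = 0) :
    ∃ c ∈ HammingCode F (r + 1),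
      hwt c = ∑ i, hwt (p i) + if ∑ i, (lineMoments (p i)).2 = 0 then 0 else 1 := by
  obtain ⟨e⟩ := Function.Embedding.nonempty_of_card_le hι
  have hG : (fun m => (lineMoments (Function.extend e p 0 m)).1) = 0 := by
    ext m
    by_cases hm : ∃ i, e i = m
    · obtain ⟨i, rfl⟩ := hm
      simpa [e.injective.extend_apply] using hp i
    · simp [Function.extend_apply' _ _ _ hm]
  obtain ⟨c, hc, hwtc⟩ := exists_mem_hammingCode_succ _ (hG ▸ zero_mem_hammingCode r)
  refine ⟨c, hc, ?_⟩
  rwa [Fintype.sum_comp_extend_zero e p hwt_zero,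
    Fintype.sum_comp_extend_zero e p (φ := fun g => (lineMoments g).2) (by simp)] at hwtc

theorem three_le_hwt {c : ProjReps F r → F} (hc : c ∈ HammingCode F r) (h0 : c ≠ 0) :
    3 ≤ hwt c := by
  by_contra! hlt
  obtain ⟨u, hu⟩ : ∃ u, c u ≠ 0 := Function.ne_iff.mp h0
  rw [hwt_eq_card] at hlt
  have : Nonempty (ProjReps F r) := ⟨u⟩
  obtain ⟨v, hv⟩ := card_le_one_iff_subset_singleton.mp
    (show #(({u | c u ≠ 0} : Finset _).erase u) ≤ 1 by rw [card_erase_of_mem (by simpa)]; omega)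
  have hsum : ∑ w ∈ {u, v}, c w • (w : Fin r → F) = 0 := by
    rw [sum_subset (subset_univ _)]
    · exact mem_hammingCode_iff.mp hc
    · intro w _ hw
      suffices c w = 0 by rw [this, zero_smul]
      by_contra hcw
      refine hw (mem_insert_of_mem (hv (mem_erase.mpr ⟨?_, by simpa using hcw⟩)))
      rintro rfl
      exact hw (mem_insert_self _ _)
  by_cases huv : u = v
  · subst huv
    simp only [mem_singleton, insert_eq_of_mem, sum_singleton, smul_eq_zero] at hsum
    exact hsum.elim hu (ProjReps.ne_zero u.2)
  · rw [sum_pair huv] at hsum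
    exact hu (ProjReps.smul_add_smul_eq_zero u.2 v.2 (Subtype.coe_ne_coe.mpr huv) hsum)

theorem hwt_eq_zero_or_mem_Icc {c : ProjReps F r → F} (hc : c ∈ HammingCode F r) :
    hwt c = 0 ∨ 3 ≤ hwt c ∧ hwt c ≤ Fintype.card (ProjReps F r) := by
  by_cases h0 : c = 0
  · exact .inl (h0 ▸ hwt_zero)
  · exact .inr ⟨three_le_hwt hc h0, hwt_le_card c⟩

theorem eq_zero_of_mem_hammingCode_one {c : ProjReps F 1 → F} (hc : c ∈ HammingCode F 1) :
    c = 0 := by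
  by_contra h0
  have := (three_le_hwt hc h0).trans (hwt_le_card c)
  rw [ProjReps.card_succ, ProjReps.card_zero] at this
  omega

end Code

section Patterns

variable {F : Type*} [Field F] [DecidableEq F] {x y z : F}

def threePoint (x y z : F) : F → F :=
  Pi.single x (y - z) + Pi.single y (z - x) + Pi.single z (x - y)

theorem threePoint_apply_left (hxy : x ≠ y) (hxz : x ≠ z) : threePoint x y z x = y - z := by
  simp [threePoint, hxy, hxz]

theorem threePoint_apply_mid (hxy : x ≠ y) (hyz : y ≠ z) : threePoint x y z y = z - x := by
  simp [threePoint, hxy.symm, hyz]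

theorem threePoint_apply_right (hxz : x ≠ z) (hyz : y ≠ z) : threePoint x y z z = x - y := by
  simp [threePoint, hxz.symm, hyz.symm]

theorem threePoint_apply_of_ne {t : F} (hx : t ≠ x) (hy : t ≠ y) (hz : t ≠ z) :
    threePoint x y z t = 0 := by
  simp [threePoint, hx, hy, hz]

theorem hwt_threePoint (hxy : x ≠ y) (hxz : x ≠ z) (hyz : y ≠ z) :
    hwt (threePoint x y z) = 3 := by
  rw [hwt, Set.ncard_eq_three]
  refine ⟨x, y, z, hxy, hxz, hyz, Set.ext fun t => ?_⟩
  by_cases hx : t = x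
  · subst hx; simp [threePoint_apply_left hxy hxz, sub_eq_zero, hyz]
  by_cases hy : t = y
  · subst hy; simp [threePoint_apply_mid hxy hyz, sub_eq_zero, hxz.symm]
  by_cases hz : t = z
  · subst hz; simp [threePoint_apply_right hxz hyz, sub_eq_zero, hxy]
  simp [threePoint_apply_of_ne hx hy hz, hx, hy, hz]

def dipole : F → F := Pi.single 1 1 - Pi.single 0 1

theorem hwt_dipole : hwt (dipole : F → F) = 2 := by
  rw [hwt, Set.ncard_eq_two]
  refine ⟨1, 0, one_ne_zero, Set.ext fun t => ?_⟩
  by_cases h1 : t = 1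
  · simp [dipole, h1]
  by_cases h0 : t = 0
  · simp [dipole, h0]
  simp [dipole, h1, h0]

theorem support_add_smul_threePoint {g : F → F} {t₀ s s' μ : F} (ht₀ : g t₀ = 0)
    (hs : g s ≠ 0) (hs' : g s' ≠ 0) (hss' : s ≠ s') (hμ : μ ≠ 0)
    (hs₁ : g s + μ * (s' - t₀) ≠ 0) (hs₂ : g s' + μ * (t₀ - s) ≠ 0) :
    Function.support (g + μ • threePoint t₀ s s') = insert t₀ (Function.support g) := by
  have ht₀s : t₀ ≠ s := fun h => hs (h ▸ ht₀)
  have ht₀s' : t₀ ≠ s' := fun h => hs' (h ▸ ht₀)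
  ext t
  simp only [Function.mem_support, Set.mem_insert_iff, Pi.add_apply, Pi.smul_apply, smul_eq_mul]
  by_cases h₀ : t = t₀
  · simp [h₀, ht₀, threePoint_apply_left ht₀s ht₀s', hμ, sub_eq_zero, hss']
  by_cases h₁ : t = s
  · simp [h₁, threePoint_apply_mid ht₀s hss', hs₁, hs]
  by_cases h₂ : t = s'
  · simp [h₂, threePoint_apply_right ht₀s' hss', hs₂, hs']
  simp [threePoint_apply_of_ne h₀ h₁ h₂, h₀]

variable [Fintype F]

theorem lineMoments_single (a b : F) : lineMoments (Pi.single a b) = (b, b * a) := by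
  simp [lineMoments_apply, Pi.single_apply]

theorem lineMoments_threePoint : lineMoments (threePoint x y z) = 0 := by
  simp only [threePoint, map_add, lineMoments_single]
  ext
  · simp
  · simp only [Prod.snd_add, Prod.snd_zero]; ring

theorem lineMoments_dipole : lineMoments (dipole : F → F) = (0, 1) := by
  rw [dipole, map_sub, lineMoments_single, lineMoments_single]
  simp

/-- Adding a suitable multiple of `threePoint t₀ s s'`, with `t₀` outside the support of `g` and
`s, s'` inside it, enlarges the support by `t₀` without changing the moments. -/
theorem exists_hwt_succ_lineMoments_eq (hq : 4 ≤ Fintype.card F) {g : F → F}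
    (h2 : 2 ≤ hwt g) (hlt : hwt g < Fintype.card F) :
    ∃ g' : F → F, hwt g' = hwt g + 1 ∧ lineMoments g' = lineMoments g := by
  rw [hwt_eq_card] at h2 hlt
  obtain ⟨t₀, -, ht₀⟩ := exists_mem_notMem_of_card_lt_card (t := univ) (by simpa using hlt)
  obtain ⟨s, hs, s', hs', hss'⟩ := one_lt_card.mp (lt_of_lt_of_le one_lt_two h2)
  simp only [mem_filter, mem_univ, true_and, not_not] at ht₀ hs hs'
  have ht₀s : t₀ ≠ s := fun h => hs (h ▸ ht₀)
  have ht₀s' : t₀ ≠ s' := fun h => hs' (h ▸ ht₀)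
  obtain ⟨μ, -, hμ⟩ := exists_mem_notMem_of_card_lt_card
    (s := {0, -g s / (s' - t₀), -g s' / (t₀ - s)}) (t := univ)
    (card_le_three.trans_lt (by rw [card_univ]; omega))
  simp only [mem_insert, mem_singleton, not_or] at hμ
  obtain ⟨hμ0, hμs, hμs'⟩ := hμ
  have hs₁ : g s + μ * (s' - t₀) ≠ 0 := fun h =>
    hμs (by rw [eq_div_iff (sub_ne_zero.mpr ht₀s'.symm)]; linear_combination h)
  have hs₂ : g s' + μ * (t₀ - s) ≠ 0 := fun h =>
    hμs' (by rw [eq_div_iff (sub_ne_zero.mpr ht₀s)]; linear_combination h)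
  refine ⟨g + μ • threePoint t₀ s s', ?_, by
    rw [map_add, map_smul, lineMoments_threePoint, smul_zero, add_zero]⟩
  change (Function.support _).ncard = (Function.support g).ncard + 1
  rw [support_add_smul_threePoint ht₀ hs hs' hss' hμ0 hs₁ hs₂,
    Set.ncard_insert_of_notMem (by simpa using ht₀)]

theorem exists_hwt_eq_lineMoments_eq (hq : 4 ≤ Fintype.card F) {g₀ : F → F} (h2 : 2 ≤ hwt g₀)
    {k : ℕ} (hk : hwt g₀ ≤ k) (hkq : k ≤ Fintype.card F) :
    ∃ g : F → F, hwt g = k ∧ lineMoments g = lineMoments g₀ := by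
  induction k, hk using Nat.le_induction with
  | base => exact ⟨g₀, rfl, rfl⟩
  | succ k hk ih =>
    obtain ⟨g, rfl, hg⟩ := ih (by omega)
    obtain ⟨g', hg'k, hg'⟩ := exists_hwt_succ_lineMoments_eq hq (h2.trans hk) (by omega)
    exact ⟨g', hg'k, hg'.trans hg⟩

theorem exists_hwt_eq_lineMoments_eq_zero (hq : 4 ≤ Fintype.card F) {k : ℕ} (h3 : 3 ≤ k)
    (hk : k ≤ Fintype.card F) : ∃ g : F → F, hwt g = k ∧ lineMoments g = 0 := by
  obtain ⟨z, -, hz⟩ := exists_mem_notMem_of_card_lt_card (s := ({0, 1} : Finset F)) (t := univ)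
    (card_le_two.trans_lt (by rw [card_univ]; omega))
  simp only [mem_insert, mem_singleton, not_or] at hz
  have h3pt := hwt_threePoint zero_ne_one (Ne.symm hz.1) (Ne.symm hz.2)
  obtain ⟨g, hgk, hg⟩ := exists_hwt_eq_lineMoments_eq hq (by omega) (h3pt ▸ h3) hk
  exact ⟨g, hgk, hg.trans lineMoments_threePoint⟩

theorem exists_hwt_eq_lineMoments_eq_zero_one (hq : 4 ≤ Fintype.card F) {k : ℕ} (h2 : 2 ≤ k)
    (hk : k ≤ Fintype.card F) : ∃ g : F → F, hwt g = k ∧ lineMoments g = (0, 1) := by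
  obtain ⟨g, hgk, hg⟩ := exists_hwt_eq_lineMoments_eq hq (hwt_dipole (F := F)).ge
    (hwt_dipole (F := F) ▸ h2) hk
  exact ⟨g, hgk, hg.trans lineMoments_dipole⟩

end Patterns

section CardThree

variable {F : Type*} [Field F] [Fintype F]

theorem three_eq_zero_of_card_eq_three (hq : Fintype.card F = 3) : (3 : F) = 0 := by
  exact_mod_cast hq ▸ FiniteField.cast_card_eq_zero F

theorem two_ne_zero_of_card_eq_three (hq : Fintype.card F = 3) : (2 : F) ≠ 0 := fun h =>
  one_ne_zero (by linear_combination three_eq_zero_of_card_eq_three hq - h)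

theorem sum_eq_of_card_eq_three {M : Type*} [AddCommMonoid M] (hq : Fintype.card F = 3)
    (f : F → M) : ∑ t, f t = f 0 + f 1 + f (-1) := by
  classical
  have h1 : (1 : F) ≠ -1 := fun h =>
    two_ne_zero_of_card_eq_three hq (by linear_combination h)
  have h0 : (0 : F) ∉ ({1, -1} : Finset F) := by simp
  rw [← eq_univ_of_card {0, 1, -1} (by rw [card_insert_of_notMem h0, card_pair h1, hq]),
    sum_insert h0, sum_pair h1, add_assoc]

/-- Over `𝔽₃` a nowhere-zero pattern with zero sum is constant. -/
theorem lineMoments_snd_eq_zero_of_card_eq_three (hq : Fintype.card F = 3) {g : F → F}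
    (hg : ∀ t, g t ≠ 0) (h1 : (lineMoments g).1 = 0) : (lineMoments g).2 = 0 := by
  have hsq : ∀ x : F, x ≠ 0 → x ^ 2 = 1 := fun x hx => by
    simpa [hq] using FiniteField.pow_card_sub_one_eq_one x hx
  have h1' : g 0 + g 1 + g (-1) = 0 := by
    rwa [lineMoments_apply, sum_eq_of_card_eq_three hq] at h1
  have h2' : (lineMoments g).2 = g 1 - g (-1) := by
    change ∑ t, g t * t = _
    rw [sum_eq_of_card_eq_three hq]
    ring
  rw [h2']
  have : (g 1 - g (-1)) * (g 1 + g (-1)) = 0 := by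
    linear_combination hsq _ (hg 1) - hsq _ (hg (-1))
  rcases mul_eq_zero.mp this with h | h
  · exact h
  · exact absurd (by linear_combination h1' - h) (hg 0)

end CardThree

section Weights

variable {F : Type*} [Field F] [Fintype F] [DecidableEq F] {r : ℕ}

theorem exists_hwt_eq_of_lines (hq : 2 < Fintype.card F) (a : ℕ) {k : ℕ} (g : Fin k → F → F)
    (hlen : a + k ≤ Fintype.card (ProjReps F r)) (hg : ∀ i, (lineMoments (g i)).1 = 0) :
    ∃ c ∈ HammingCode F (r + 1), hwt c = Fintype.card F * a + ∑ i, hwt (g i) +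
      if ∑ i, (lineMoments (g i)).2 = 0 then 0 else 1 := by
  have hone : hwt (1 : F → F) = Fintype.card F := hwt_eq_card_of_forall_ne_zero fun _ => one_ne_zero
  obtain ⟨c, hc, hwtc⟩ := exists_mem_hammingCode_succ_of_family (ι := Fin a ⊕ Fin k)
    (by simpa using hlen) (Sum.elim 1 g) (by rintro (i | i) <;> simp [lineMoments_one hq, hg])
  refine ⟨c, hc, ?_⟩
  simpa [Fintype.sum_sum_type, hone, lineMoments_one hq, mul_comm] using hwtc

theorem exists_hwt_eq_of_four_le_card (hq : 4 ≤ Fintype.card F) {w : ℕ} (h3 : 3 ≤ w)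
    (hw : w ≤ Fintype.card F * Fintype.card (ProjReps F r) + 1) :
    ∃ c ∈ HammingCode F (r + 1), hwt c = w := by
  -- `w = q a + (b + 2) + 1` with `2 ≤ b + 2 ≤ q + 1`; the apex contributes the last `1`.
  obtain ⟨a, b, hab, hb⟩ : ∃ a b, w - 3 = Fintype.card F * a + b ∧ b < Fintype.card F :=
    ⟨_, _, (Nat.div_add_mod _ _).symm, Nat.mod_lt _ (by omega)⟩
  rcases Nat.lt_or_ge (b + 2) (Fintype.card F + 1) with hb2 | hb2
  · obtain ⟨g, hgk, hg⟩ := exists_hwt_eq_lineMoments_eq_zero_one hq (k := b + 2) (by omega)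
      (by omega)
    have han : a < Fintype.card (ProjReps F r) :=
      Nat.lt_of_mul_lt_mul_left (a := Fintype.card F) (by omega)
    obtain ⟨c, hc, hwtc⟩ := exists_hwt_eq_of_lines (r := r) (by omega) a ![g] (by omega)
      (by simp [hg])
    exact ⟨c, hc, by rw [hwtc]; simp [hgk, hg]; omega⟩
  · obtain ⟨g, hgk, hg⟩ := exists_hwt_eq_lineMoments_eq_zero hq (k := Fintype.card F - 1)
      (by omega) (by omega)
    have han : a + 1 < Fintype.card (ProjReps F r) :=
      Nat.lt_of_mul_lt_mul_left (a := Fintype.card F) (by rw [mul_add]; omega)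
    obtain ⟨c, hc, hwtc⟩ := exists_hwt_eq_of_lines (r := r) (by omega) a ![dipole, g]
      (by omega) (by simp [Fin.forall_fin_two, lineMoments_dipole, hg])
    refine ⟨c, hc, ?_⟩
    rw [hwtc]
    simp [Fin.sum_univ_two, hgk, hg, hwt_dipole, lineMoments_dipole]
    omega

theorem exists_hwt_eq_of_card_eq_three (hq : Fintype.card F = 3) {w : ℕ} (h3 : 3 ≤ w)
    (hw : w ≤ 3 * Fintype.card (ProjReps F r)) : ∃ c ∈ HammingCode F (r + 1), hwt c = w := by
  have hq2 : 2 < Fintype.card F := by omega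
  have hneg : hwt (-dipole : F → F) = 2 :=
    (congrArg Set.ncard (Function.support_neg _)).trans hwt_dipole
  obtain ⟨a, b, hab, hb⟩ : ∃ a b, w - 3 = 3 * a + b ∧ b < 3 :=
    ⟨_, _, (Nat.div_add_mod _ _).symm, Nat.mod_lt _ (by omega)⟩
  interval_cases b
  · obtain ⟨c, hc, hwtc⟩ := exists_hwt_eq_of_lines (r := r) hq2 (a + 1) ![] (by omega)
      (by simp)
    exact ⟨c, hc, by rw [hwtc]; simp [hq]; omega⟩
  · obtain ⟨c, hc, hwtc⟩ := exists_hwt_eq_of_lines (r := r) hq2 a ![dipole, -dipole]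
      (by omega) (by simp [Fin.forall_fin_two, lineMoments_dipole])
    refine ⟨c, hc, ?_⟩
    rw [hwtc]
    simp [hq, Fin.sum_univ_two, hwt_dipole, hneg, lineMoments_dipole]
    omega
  · obtain ⟨c, hc, hwtc⟩ := exists_hwt_eq_of_lines (r := r) hq2 a ![dipole, dipole]
      (by omega) (by simp [Fin.forall_fin_two, lineMoments_dipole])
    have h2 := two_ne_zero_of_card_eq_three hq
    refine ⟨c, hc, ?_⟩
    rw [hwtc]
    simp [hq, Fin.sum_univ_two, hwt_dipole, lineMoments_dipole, one_add_one_eq_two, h2]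
    omega

/-- On each line `m` put a full-support pattern with moments `c₀ m • (1, [m = m₀])`, where
`c₀ m₀ ≠ 0`: the first moments form the codeword `c₀` and the second moments sum to `c₀ m₀`. -/
theorem exists_hwt_eq_card_mul_add_one (h2 : (2 : F) ≠ 0) (hq : 2 < Fintype.card F)
    {c₀ : ProjReps F r → F} (hc₀ : c₀ ∈ HammingCode F r) (hne : c₀ ≠ 0) :
    ∃ c ∈ HammingCode F (r + 1), hwt c = Fintype.card F * Fintype.card (ProjReps F r) + 1 := by
  obtain ⟨m₀, hm₀⟩ : ∃ m₀, c₀ m₀ ≠ 0 := Function.ne_iff.mp hne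
  let a : ProjReps F r → F := fun m => if m = m₀ then 1 else 0
  let G : ProjReps F r → F → F := fun m => if c₀ m = 0 then 1 else c₀ m • (1 + Pi.single (a m) 1)
  have hfull : ∀ b : F, hwt (1 + Pi.single b 1 : F → F) = Fintype.card F := fun b =>
    hwt_eq_card_of_forall_ne_zero fun t => by
      by_cases ht : t = b <;> simp [ht, one_add_one_eq_two, h2]
  have hG : ∀ m, hwt (G m) = Fintype.card F ∧ lineMoments (G m) = c₀ m • (1, a m) := by
    intro m
    by_cases hm : c₀ m = 0
    · simp [G, hm, lineMoments_one hq, hwt_eq_card_of_forall_ne_zero]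
    · simp only [G, if_neg hm, hwt_smul hm, hfull, map_smul, map_add, lineMoments_one hq,
        lineMoments_single, zero_add, one_mul, true_and]
  obtain ⟨c, hc, hwtc⟩ := exists_mem_hammingCode_succ G (by simpa [hG] using hc₀)
  refine ⟨c, hc, ?_⟩
  simp [hwtc, hG, a, hm₀, mul_comm]

theorem hwt_ne_four_of_card_eq_three (hq : Fintype.card F = 3) {c : ProjReps F 2 → F}
    (hc : c ∈ HammingCode F 2) : hwt c ≠ 4 := by
  intro h4
  have hfull := forall_ne_zero_of_hwt_eq_card (h4.trans <| by
    rw [ProjReps.card_succ, ProjReps.card_succ, ProjReps.card_zero, hq])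
  obtain ⟨h1, h2⟩ := (mem_hammingCode_succ_iff c).mp hc
  have hsnd : ∀ m, (lineMoments fun t => c (ProjReps.lift m t)).2 = 0 := fun m =>
    lineMoments_snd_eq_zero_of_card_eq_three hq (fun t => hfull _)
      (congrFun (eq_zero_of_mem_hammingCode_one h1) m)
  simp only [hsnd, sum_const_zero, zero_add] at h2
  exact hfull _ h2

theorem exists_hwt_eq (hq : 2 < Fintype.card F) (hr : Fintype.card F = 3 → 2 ≤ r) {w : ℕ}
    (h3 : 3 ≤ w) (hw : w ≤ Fintype.card F * Fintype.card (ProjReps F r) + 1) :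
    ∃ c ∈ HammingCode F (r + 1), hwt c = w := by
  rcases Nat.lt_or_ge 3 (Fintype.card F) with hq4 | hq3
  · exact exists_hwt_eq_of_four_le_card hq4 h3 hw
  have hq3 : Fintype.card F = 3 := by omega
  rw [hq3] at hw
  rcases Nat.lt_or_ge w (3 * Fintype.card (ProjReps F r) + 1) with hlt | hge
  · exact exists_hwt_eq_of_card_eq_three hq3 h3 (by omega)
  obtain ⟨s, rfl⟩ : ∃ s, r = s + 1 + 1 := ⟨r - 2, by have := hr hq3; omega⟩
  obtain ⟨c₀, hc₀, hwt₀⟩ := exists_hwt_eq_of_card_eq_three (r := s + 1) hq3 le_rfl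
    (by have := ProjReps.one_le_card (F := F) (Nat.le_add_left 1 s); omega)
  obtain ⟨c, hc, hwtc⟩ := exists_hwt_eq_card_mul_add_one (two_ne_zero_of_card_eq_three hq3) hq hc₀
    (by rintro rfl; simp [hwt_zero] at hwt₀)
  exact ⟨c, hc, by rw [hwtc, hq3]; omega⟩

end Weights

/-- For a prime power `q > 2` and `r ≥ 2`: if `(q,r) ≠ (3,2)` then the weight set of
the `q`-ary Hamming code `H_r(q)` equals `{0} ∪ {3, 4, …, (q^r - 1)/(q - 1)}`, while in
the exceptional case `(q,r) = (3,2)` the weight set of `H_2(3)` equals `{0, 3}`. -/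
theorem stmt19 {F : Type*} [Field F] [Fintype F]
    (q : ℕ) (hq : q = Fintype.card F) (hq2 : 2 < q)
    (r : ℕ) (hr : 2 ≤ r) :
    (¬(q = 3 ∧ r = 2) →
      {w : ℕ | ∃ c ∈ HammingCode F r, hwt c = w}
        = {0} ∪ Set.Icc 3 ((q ^ r - 1) / (q - 1))) ∧
    ((q = 3 ∧ r = 2) →
      {w : ℕ | ∃ c ∈ HammingCode F r, hwt c = w} = {0, 3}) := by
  classical
  subst hq
  obtain ⟨s, rfl⟩ : ∃ s, r = s + 1 := ⟨r - 1, by omega⟩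
  rw [← ProjReps.card_eq_div, ProjReps.card_succ]
  refine ⟨fun hexc => Set.ext fun w => ⟨?_, ?_⟩, fun ⟨hq3, hs⟩ => Set.ext fun w => ⟨?_, ?_⟩⟩
  · rintro ⟨c, hc, rfl⟩
    simpa only [Set.mem_union, Set.mem_singleton_iff, Set.mem_Icc, ProjReps.card_succ]
      using hwt_eq_zero_or_mem_Icc hc
  · rintro (rfl | ⟨h3, hw⟩)
    · exact ⟨0, zero_mem_hammingCode _, hwt_zero⟩
    · exact exists_hwt_eq hq2 (fun h => by omega) h3 hw
  · rintro ⟨c, hc, rfl⟩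
    obtain rfl : s = 1 := by omega
    have h4 := hwt_ne_four_of_card_eq_three hq3 hc
    have hcases := hwt_eq_zero_or_mem_Icc hc
    simp only [ProjReps.card_succ, ProjReps.card_zero, hq3] at hcases
    simp only [Set.mem_insert_iff, Set.mem_singleton_iff]
    omega
  · obtain rfl : s = 1 := by omega
    rintro (rfl | rfl)
    · exact ⟨0, zero_mem_hammingCode _, hwt_zero⟩
    · exact exists_hwt_eq_of_card_eq_three hq3 le_rfl
        (by rw [ProjReps.card_succ, ProjReps.card_zero, hq3])
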